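/- Let α > 0 and let (u,f) be a pair of real-valued functions on (0,∞), absolutely continuous on compact subintervals of (0,∞), with lim_{r→0} u(r) = 1, lim_{r→0} f(r) = 0, lim_{r→∞} u(r) = 0, lim_{r→∞} f(r) = 1, and finite energy I(u,f) = ∫₀^∞ [2 u'² + (1−u²)²/r² + α r² f'² + 2α f² u²] dr < ∞. Then I(u,f) ≥ 2√α, with equality if and only if u' + √α f u = 0 and √α r f' = (1−u²)/r almost everywhere on (0,∞). -/

import Mathlib

/-!
Completing the square turns the energy density into
`2 (u' + √α f u)² + (√α r f' - (1 - u²)/r)² + 2√α (f (1 - u²))'`.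
The boundary conditions make `f (1 - u²)` run from `0` at the origin to `1` at infinity, so the
last term integrates to `2√α`, while the squares integrate to something nonnegative that vanishes
exactly when both squares vanish almost everywhere. The analytic input is the product rule for
locally absolutely continuous functions, and the integrability of the cross term, which is
dominated by the energy density (complete the square with `-√α` in place of `√α`).
-/

open MeasureTheory Filter Set Topology

noncomputable section

/-- `g` is absolutely continuous on every compact subinterval of `(0,∞)`,
with almost-everywhere derivative `g'`. -/
def LocAC (g g' : ℝ → ℝ) : Prop :=
  ∀ a b : ℝ, 0 < a → a ≤ b →
    IntervalIntegrable g' volume a b ∧ g b - g a = ∫ t in a..b, g' t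

/-- The integrand of the BPS (`β = 2`, `γ = 0`) energy functional
`I(u,f) = ∫₀^∞ [2 u'² + (1−u²)²/r² + α r² f'² + 2α f² u²] dr`. -/
def bpsIntegrand (α : ℝ) (u u' f f' : ℝ → ℝ) (r : ℝ) : ℝ :=
  2 * u' r ^ 2 + (1 - u r ^ 2) ^ 2 / r ^ 2
    + α * r ^ 2 * f' r ^ 2 + 2 * α * f r ^ 2 * u r ^ 2

theorem AbsolutelyContinuousOnInterval.congr {f g : ℝ → ℝ} {a b : ℝ}
    (hf : AbsolutelyContinuousOnInterval f a b) (h : EqOn f g (uIcc a b)) :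
    AbsolutelyContinuousOnInterval g a b := by
  refine hf.congr' ?_
  filter_upwards [mem_inf_of_right (mem_principal_self _)] with E hE
  exact Finset.sum_congr rfl fun i hi => by rw [h (hE.1 i hi).1, h (hE.1 i hi).2]

namespace LocAC

variable {g g' : ℝ → ℝ} {a b : ℝ}

theorem eqOn_add_integral (hg : LocAC g g') (ha : 0 < a) :
    EqOn g (fun x => g a + ∫ t in a..x, g' t) (Ici a) := fun x hx => by
  simp only [← (hg a x ha hx).2]
  ring

theorem absolutelyContinuousOnInterval (hg : LocAC g g') (ha : 0 < a) (hab : a ≤ b) :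
    AbsolutelyContinuousOnInterval g a b := by
  have hprim := (hg a b ha hab).1.absolutelyContinuousOnInterval_intervalIntegral
    (c := a) left_mem_uIcc
  refine ((LipschitzWith.const (g a)).lipschitzOnWith.absolutelyContinuousOnInterval.fun_add
    hprim).congr ?_
  refine ((hg.eqOn_add_integral ha).mono ?_).symm
  rw [uIcc_of_le hab]
  exact Icc_subset_Ici_self

theorem ae_deriv_eq (hg : LocAC g g') (ha : 0 < a) (hab : a ≤ b) :
    ∀ᵐ x, x ∈ uIoc a b → deriv g x = g' x := by
  filter_upwards [(hg a b ha hab).1.ae_hasDerivAt_integral] with x hx hxab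
  have hx' : x ∈ Ioi a := by rw [uIoc_of_le hab] at hxab; exact hxab.1
  have hderiv := (hx (uIoc_subset_uIcc hxab) a left_mem_uIcc).const_add (g a)
  exact (hderiv.congr_of_eventuallyEq
    ((hg.eqOn_add_integral ha).eventuallyEq_of_mem (Ici_mem_nhds hx'))).deriv

theorem mul {p p' q q' : ℝ → ℝ} (hp : LocAC p p') (hq : LocAC q q') :
    LocAC (fun r => p r * q r) (fun r => p' r * q r + p r * q' r) := by
  intro a b ha hab
  have hpac := hp.absolutelyContinuousOnInterval ha hab
  have hqac := hq.absolutelyContinuousOnInterval ha hab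
  refine ⟨((hp a b ha hab).1.mul_continuousOn hqac.continuousOn).add
    ((hq a b ha hab).1.continuousOn_mul hpac.continuousOn), ?_⟩
  rw [← hpac.integral_deriv_mul_eq_sub hqac]
  refine intervalIntegral.integral_congr_ae ?_
  filter_upwards [ae_deriv_eq hp ha hab, ae_deriv_eq hq ha hab] with x hpx hqx hx
  rw [hpx hx, hqx hx]

theorem const_sub (hg : LocAC g g') (c : ℝ) :
    LocAC (fun r => c - g r) (fun r => -g' r) := fun a b ha hab => by
  refine ⟨(hg a b ha hab).1.neg, ?_⟩
  rw [intervalIntegral.integral_neg, ← (hg a b ha hab).2]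
  ring

theorem locallyIntegrableOn (hg : LocAC g g') : LocallyIntegrableOn g' (Ioi 0) := by
  intro x hx
  have hx : 0 < x := hx
  have hle : x / 2 ≤ 2 * x := by linarith
  refine ⟨Icc (x / 2) (2 * x), nhdsWithin_le_nhds (Icc_mem_nhds (by linarith) (by linarith)), ?_⟩
  exact (intervalIntegrable_iff_integrableOn_Icc_of_le hle).1 (hg _ _ (by positivity) hle).1

theorem integral_Ioi_eq_sub {l₀ l₁ : ℝ} (hg : LocAC g g') (hint : IntegrableOn g' (Ioi 0))
    (h0 : Tendsto g (𝓝[>] 0) (𝓝 l₀)) (h1 : Tendsto g atTop (𝓝 l₁)) :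
    ∫ r in Ioi 0, g' r = l₁ - l₀ := by
  let l : Filter (ℝ × ℝ) := 𝓝[>] 0 ×ˢ atTop
  have hfst : Tendsto Prod.fst l (𝓝[>] 0) := tendsto_fst
  have hcover : AECover (volume.restrict (Ioi 0)) l fun i => Ioc i.1 i.2 :=
    (aecover_Ioi_of_Ioi (hfst.mono_right nhdsWithin_le_nhds)).inter
      (aecover_Iic tendsto_snd).restrict
  refine hcover.integral_eq_of_tendsto _ hint
    (((h1.comp tendsto_snd).sub (h0.comp hfst)).congr' ?_)
  have hpos : ∀ᶠ i in l, 0 < i.1 ∧ i.1 < 1 := hfst.eventually (Ioo_mem_nhdsGT zero_lt_one)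
  filter_upwards [hpos, tendsto_snd.eventually (eventually_ge_atTop 1)] with i hi hi2
  have hle : i.1 ≤ i.2 := by linarith [hi.2]
  rw [Measure.restrict_restrict measurableSet_Ioc,
    inter_eq_left.2 (Ioc_subset_Ioi_self.trans (Ioi_subset_Ioi hi.1.le)),
    ← intervalIntegral.integral_of_le hle, ← (hg _ _ hi.1 hle).2]
  rfl

end LocAC

def bogomolnyDefect (s : ℝ) (u u' f f' : ℝ → ℝ) (r : ℝ) : ℝ :=
  2 * (u' r + s * f r * u r) ^ 2 + (s * r * f' r - (1 - u r ^ 2) / r) ^ 2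

section Bogomolny

variable (s : ℝ) (u u' f f' : ℝ → ℝ)

theorem bogomolnyDefect_nonneg (r : ℝ) : 0 ≤ bogomolnyDefect s u u' f f' r := by
  unfold bogomolnyDefect
  positivity

theorem bogomolnyDefect_eq_zero_iff (r : ℝ) :
    bogomolnyDefect s u u' f f' r = 0 ↔
      u' r + s * f r * u r = 0 ∧ s * r * f' r = (1 - u r ^ 2) / r := by
  unfold bogomolnyDefect
  rw [add_eq_zero_iff_of_nonneg (by positivity) (by positivity), ← sub_eq_zero (b := _ / r)]
  simp

theorem bpsIntegrand_eq_bogomolnyDefect_add {r : ℝ} (hr : r ≠ 0) :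
    bpsIntegrand (s ^ 2) u u' f f' r = bogomolnyDefect s u u' f f' r
      + 2 * s * (f' r * (1 - u r * u r) + f r * -(u' r * u r + u r * u' r)) := by
  unfold bpsIntegrand bogomolnyDefect
  field_simp
  ring

theorem abs_flux_le_bpsIntegrand {r : ℝ} (hr : r ≠ 0) :
    |2 * s * (f' r * (1 - u r * u r) + f r * -(u' r * u r + u r * u' r))|
      ≤ bpsIntegrand (s ^ 2) u u' f f' r := by
  have hplus := bpsIntegrand_eq_bogomolnyDefect_add s u u' f f' hr
  have hminus := bpsIntegrand_eq_bogomolnyDefect_add (-s) u u' f f' hr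
  rw [neg_sq] at hminus
  rw [abs_le]
  constructor <;> linarith [bogomolnyDefect_nonneg s u u' f f' r,
    bogomolnyDefect_nonneg (-s) u u' f f' r]

end Bogomolny

theorem integral_bpsIntegrand_eq {s : ℝ} (hs : 0 < s) {u u' f f' : ℝ → ℝ}
    (hu : LocAC u u') (hf : LocAC f f')
    (hu0 : Tendsto u (𝓝[>] 0) (𝓝 1)) (hf0 : Tendsto f (𝓝[>] 0) (𝓝 0))
    (huinf : Tendsto u atTop (𝓝 0)) (hfinf : Tendsto f atTop (𝓝 1))
    (hfin : IntegrableOn (bpsIntegrand (s ^ 2) u u' f f') (Ioi 0)) :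
    IntegrableOn (bogomolnyDefect s u u' f f') (Ioi 0) ∧
      ∫ r in Ioi 0, bpsIntegrand (s ^ 2) u u' f f' r
        = (∫ r in Ioi 0, bogomolnyDefect s u u' f f' r) + 2 * s := by
  have hG := hf.mul ((hu.mul hu).const_sub 1)
  have hflux : IntegrableOn (fun r => 2 * s *
      (f' r * (1 - u r * u r) + f r * -(u' r * u r + u r * u' r))) (Ioi 0) := by
    refine hfin.mono' (hG.locallyIntegrableOn.aestronglyMeasurable.const_mul _) ?_
    filter_upwards [ae_restrict_mem measurableSet_Ioi] with r hr
    exact abs_flux_le_bpsIntegrand s u u' f f' (ne_of_gt hr)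
  have hflux_integral := hG.integral_Ioi_eq_sub
    ((integrable_const_mul_iff (by positivity : (2 * s) ≠ 0).isUnit _).1 hflux)
    (hf0.mul ((hu0.mul hu0).const_sub 1)) (hfinf.mul ((huinf.mul huinf).const_sub 1))
  have hsplit : EqOn (bpsIntegrand (s ^ 2) u u' f f') (fun r => bogomolnyDefect s u u' f f' r
      + 2 * s * (f' r * (1 - u r * u r) + f r * -(u' r * u r + u r * u' r))) (Ioi 0) :=
    fun r hr => bpsIntegrand_eq_bogomolnyDefect_add s u u' f f' (ne_of_gt hr)
  have hdefect : IntegrableOn (bogomolnyDefect s u u' f f') (Ioi 0) :=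
    (hfin.sub hflux).congr_fun (fun r hr => by simp [hsplit hr]) measurableSet_Ioi
  refine ⟨hdefect, ?_⟩
  rw [setIntegral_congr_fun measurableSet_Ioi hsplit, integral_add hdefect hflux,
    integral_const_mul, hflux_integral]
  norm_num

/-- the Bogomolny bound `I(u,f) ≥ 2√α`, with equality if and only if the
first-order BPS equations hold almost everywhere on `(0,∞)`. -/
theorem bogomolny_bound (α : ℝ) (hα : 0 < α) (u u' f f' : ℝ → ℝ)
    (hu : LocAC u u') (hf : LocAC f f')
    (hu0 : Tendsto u (𝓝[>] (0 : ℝ)) (𝓝 1))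
    (hf0 : Tendsto f (𝓝[>] (0 : ℝ)) (𝓝 0))
    (huinf : Tendsto u atTop (𝓝 0))
    (hfinf : Tendsto f atTop (𝓝 1))
    (hfin : IntegrableOn (bpsIntegrand α u u' f f') (Ioi 0)) :
    2 * Real.sqrt α ≤ ∫ r in Ioi (0 : ℝ), bpsIntegrand α u u' f f' r ∧
      ((∫ r in Ioi (0 : ℝ), bpsIntegrand α u u' f f' r) = 2 * Real.sqrt α ↔
        ∀ᵐ r ∂(volume.restrict (Ioi (0 : ℝ))),
          u' r + Real.sqrt α * f r * u r = 0 ∧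
          Real.sqrt α * r * f' r = (1 - u r ^ 2) / r) := by
  obtain ⟨s, hs, rfl⟩ : ∃ s > 0, s ^ 2 = α := ⟨√α, Real.sqrt_pos.2 hα, Real.sq_sqrt hα.le⟩
  rw [Real.sqrt_sq hs.le]
  obtain ⟨hdefect, hsplit⟩ := integral_bpsIntegrand_eq hs hu hf hu0 hf0 huinf hfinf hfin
  have hnonneg : 0 ≤ᵐ[volume.restrict (Ioi 0)] bogomolnyDefect s u u' f f' :=
    ae_of_all _ (bogomolnyDefect_nonneg s u u' f f')
  rw [hsplit]
  refine ⟨le_add_of_nonneg_left (integral_nonneg_of_ae hnonneg), ?_⟩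
  rw [add_eq_right, integral_eq_zero_iff_of_nonneg_ae hnonneg hdefect]
  exact eventually_congr (ae_of_all _ fun r => bogomolnyDefect_eq_zero_iff s u u' f f' r)
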